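/- Let (A,B) be a NITA with no nontrivial basis elements of degree 1 or 2 and let b_3 ∈ B be non-real of degree 3 with b_3·b̄_3 = 1 + b_8. If (b_3·b_8, b_3·b_8) ≥ 4, then every basis element in the support of b_3·b_8 other than b_3 has degree strictly greater than 3, and (b_3·b_8, b_3·b_8) ∈ {4, 5}. -/

import Mathlib

/-!
Write `c d` for the multiplicity of `d` in `b₃b₈`. Since `(b₃b₈, d) = (b̄₃d, b₈)`, comparing degrees
in `b̄₃d` shows that every constituent `d ≠ b₃` of `b₃b₈` satisfies `3 deg d = 8 c d` or
`3 deg d ≥ 8 c d + 3`; in particular `deg d ≥ 4`, and `deg d ≥ 7` when `c d ≥ 2`.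

Next `(b₃², b₃²) = (b₃ + b₃b₈, b₃) = 2`, so `b₃² = x + y` with `deg x + deg y = 9`, say
`deg x ∈ {3, 4}`. Then `(x b̄₃, x b̄₃) = (x x̄, 1 + b₈) = 1 + (x x̄, b₈)`, and the degree of `x x̄`
forces this to be `2`, so `x b̄₃ = b₃ + u` with `deg u = 3 deg x - 3`. Multiplying `b₃² = x + y` by
`b̄₃` gives `b₃b₈ = u + y b̄₃`. The constituents of `y b̄₃` other than `b₃` have total degree
`12` or `15` and obey the bounds above; this leaves at most `3` for the sum of their squared
multiplicities and keeps `u` out of them, so `(b₃b₈, b₃b₈) ≤ 2 + 3`.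
-/

/-- A normalized table algebra datum on a commutative `ℂ`-algebra `A`:
a distinguished basis `B` containing `1`, an involutive algebra
endomorphism `bar` permuting `B`, a bilinear form for which `B` is
orthonormal and which satisfies `(a, bc) = (a·b̄, c)`, nonnegative real
structure constants, and a degree homomorphism positive on `B`. -/
structure TAData (A : Type) [CommRing A] [Algebra ℂ A] : Type where
  B : Finset A
  one_mem : (1 : A) ∈ B
  indep : LinearIndependent ℂ (fun b : {x : A // x ∈ B} => (b : A))
  span_top : Submodule.span ℂ (B : Set A) = ⊤
  bar : A →ₐ[ℂ] A
  bar_bar : ∀ a : A, bar (bar a) = a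
  bar_mem : ∀ b ∈ B, bar b ∈ B
  ip : A →ₗ[ℂ] A →ₗ[ℂ] ℂ
  ip_symm : ∀ a b : A, ip a b = ip b a
  ip_self : ∀ b ∈ B, ip b b = 1
  ip_ne : ∀ b ∈ B, ∀ c ∈ B, b ≠ c → ip b c = 0
  ip_assoc : ∀ a b c : A, ip a (b * c) = ip (a * bar b) c
  struct_nonneg : ∀ b ∈ B, ∀ c ∈ B, ∀ d ∈ B, ∃ r : ℝ, 0 ≤ r ∧ ip (b * c) d = (r : ℂ)
  deg : A →ₐ[ℂ] ℂ
  deg_pos : ∀ b ∈ B, ∃ r : ℝ, 0 < r ∧ deg b = (r : ℂ)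

namespace TAData

variable {A : Type} [CommRing A] [Algebra ℂ A]

/-- Integrality (making a table algebra a NITA): all structure constants are
nonnegative integers and all degrees are positive integers. -/
def Integral (T : TAData A) : Prop :=
  (∀ b ∈ T.B, ∀ c ∈ T.B, ∀ d ∈ T.B, ∃ n : ℕ, T.ip (b * c) d = (n : ℂ)) ∧
  (∀ b ∈ T.B, ∃ n : ℕ, 0 < n ∧ T.deg b = (n : ℂ))

/-- `L₁(B) = {1}` and `L₂(B) = ∅`: no nontrivial basis elements of degree 1 or 2. -/
def NoSmall (T : TAData A) : Prop :=
  (∀ b ∈ T.B, T.deg b = 1 → b = 1) ∧ (∀ b ∈ T.B, T.deg b ≠ 2)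

/-- The table algebra is generated (as an algebra) by `b` (and its conjugate). -/
def GeneratedBy (T : TAData A) (b : A) : Prop :=
  Algebra.adjoin ℂ ({b, T.bar b} : Set A) = ⊤

/-- A table subset of `B`: contains `1`, closed under the involution and under
supports of products. -/
def IsTableSubset (T : TAData A) (C : Set A) : Prop :=
  C ⊆ ↑T.B ∧ (1 : A) ∈ C ∧ (∀ b ∈ C, T.bar b ∈ C) ∧
    ∀ b ∈ C, ∀ c ∈ C, ∀ d ∈ T.B, T.ip (b * c) d ≠ 0 → d ∈ C

end TAData

open Finset

section NatSums

variable {α : Type*} {s : Finset α} {f : α → ℕ}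

theorem Finset.sum_eq_zero_or_le_sum {m : ℕ} (h : ∀ i ∈ s, f i ≠ 0 → m ≤ f i) :
    ∑ i ∈ s, f i = 0 ∨ m ≤ ∑ i ∈ s, f i := by
  by_cases h0 : ∑ i ∈ s, f i = 0
  · exact .inl h0
  · obtain ⟨i, hi, hfi⟩ := exists_ne_zero_of_sum_ne_zero h0
    exact .inr ((h i hi hfi).trans (single_le_sum (fun _ _ => Nat.zero_le _) hi))

variable [DecidableEq α]

theorem Finset.sum_eq_of_sum_lt_add {m : ℕ} {a : α} (ha : a ∈ s)
    (h : ∀ i ∈ s, f i ≠ 0 → m ≤ f i) (hlt : ∑ i ∈ s, f i < f a + m) :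
    ∑ i ∈ s, f i = f a := by
  have hsplit := add_sum_erase s f ha
  rcases sum_eq_zero_or_le_sum (s := s.erase a) fun i hi => h i (mem_of_mem_erase hi)
    with h0 | hm <;> omega

theorem Finset.sum_sq_le_three {w D : α → ℕ}
    (hsum : ∑ i ∈ s, w i * D i = 12 ∨ ∑ i ∈ s, w i * D i = 15)
    (h4 : ∀ i ∈ s, w i ≠ 0 → 4 ≤ D i) (h7 : ∀ i ∈ s, 2 ≤ w i → 7 ≤ D i) :
    ∑ i ∈ s, w i ^ 2 ≤ 3 := by
  have hterm : ∀ i ∈ s, w i * D i ≠ 0 → 4 ≤ w i * D i := fun i hi hwD =>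
    (h4 i hi (left_ne_zero_of_mul hwD)).trans
      (Nat.le_mul_of_pos_left _ (Nat.pos_of_ne_zero (left_ne_zero_of_mul hwD)))
  by_cases hsmall : ∀ i ∈ s, w i ≤ 1
  · have : 4 * ∑ i ∈ s, w i ^ 2 ≤ ∑ i ∈ s, w i * D i := by
      rw [mul_sum]
      refine sum_le_sum fun i hi => ?_
      rcases Nat.le_one_iff_eq_zero_or_eq_one.mp (hsmall i hi) with h | h
      · simp [h]
      · simpa [h] using h4 i hi (by omega)
    omega
  · push Not at hsmall
    obtain ⟨a, ha, hwa⟩ := hsmall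
    have hDa := h7 a ha hwa
    have hwDa : 14 ≤ w a * D a := by nlinarith
    have hwaDa := sum_eq_of_sum_lt_add ha hterm (by omega)
    exfalso
    rcases Nat.lt_or_ge (w a) 3 with h | h
    · rw [show w a = 2 by omega] at hwaDa
      omega
    · rcases hsum with h' | h' <;> nlinarith

theorem Finset.exists_eq_one_of_sum_sq_eq_succ {n : ℕ} (hn : n ≤ 2)
    (h : ∑ i ∈ s, f i ^ 2 = n + 1) :
    ∃ a ∈ s, f a = 1 ∧ ∑ i ∈ s.erase a, f i ^ 2 = n := by
  obtain ⟨a, ha, hfa⟩ := exists_ne_zero_of_sum_ne_zero (h.trans_ne n.succ_ne_zero)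
  have hsplit := add_sum_erase s (fun i => f i ^ 2) ha
  have hfa1 : f a = 1 := by
    have : f a ^ 2 < 2 ^ 2 := by omega
    have := lt_of_pow_lt_pow_left₀ 2 (Nat.zero_le 2) this
    have : f a ≠ 0 := by simpa using hfa
    omega
  refine ⟨a, ha, hfa1, ?_⟩
  simp only [hfa1] at hsplit
  omega

theorem Finset.exists_of_sum_sq_eq_one (h : ∑ i ∈ s, f i ^ 2 = 1) :
    ∃ a ∈ s, ∀ i ∈ s, f i = if a = i then 1 else 0 := by
  obtain ⟨a, ha, hfa, hrest⟩ := exists_eq_one_of_sum_sq_eq_succ (by norm_num) h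
  refine ⟨a, ha, fun i hi => ?_⟩
  split_ifs with hai
  · exact hai ▸ hfa
  · have := (sum_eq_zero_iff.mp hrest) i (mem_erase.mpr ⟨Ne.symm hai, hi⟩)
    simpa using this

theorem Finset.exists_of_sum_sq_eq_two (h : ∑ i ∈ s, f i ^ 2 = 2) :
    ∃ a ∈ s, ∃ b ∈ s, a ≠ b ∧
      ∀ i ∈ s, f i = (if a = i then 1 else 0) + (if b = i then 1 else 0) := by
  obtain ⟨a, ha, hfa, hrest⟩ := exists_eq_one_of_sum_sq_eq_succ (by norm_num) h
  obtain ⟨b, hb, hfb⟩ := exists_of_sum_sq_eq_one hrest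
  obtain ⟨hba, hb⟩ := mem_erase.mp hb
  refine ⟨a, ha, b, hb, hba.symm, fun i hi => ?_⟩
  by_cases hai : a = i
  · subst hai
    simp [hfa, hba]
  · simpa [hai] using hfb i (mem_erase.mpr ⟨Ne.symm hai, hi⟩)

end NatSums

namespace TAData

variable {A : Type} [CommRing A] [Algebra ℂ A]

section

variable (T : TAData A)

theorem ip_basis [DecidableEq A] {b d : A} (hb : b ∈ T.B) (hd : d ∈ T.B) :
    T.ip b d = if b = d then 1 else 0 := by
  split_ifs with h
  · exact h ▸ T.ip_self b hb
  · exact T.ip_ne b hb d hd h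

theorem eq_sum_ip_smul (a : A) : a = ∑ d ∈ T.B, T.ip a d • d := by
  have key : ∑ d ∈ T.B, (T.ip.flip d).smulRight d = LinearMap.id := by
    refine LinearMap.ext_on T.span_top fun b hb => ?_
    simp only [LinearMap.sum_apply, LinearMap.smulRight_apply, LinearMap.flip_apply,
      LinearMap.id_apply]
    rw [sum_eq_single_of_mem b hb fun d hd hdb => by rw [T.ip_ne b hb d hd hdb.symm, zero_smul],
      T.ip_self b hb, one_smul]
  simpa using (LinearMap.congr_fun key a).symm

theorem ext_ip {a c : A} (h : ∀ d ∈ T.B, T.ip a d = T.ip c d) : a = c := by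
  rw [T.eq_sum_ip_smul a, T.eq_sum_ip_smul c]
  exact sum_congr rfl fun d hd => by rw [h d hd]

theorem ip_eq_sum (a c : A) : T.ip a c = ∑ d ∈ T.B, T.ip a d * T.ip c d := by
  conv_lhs => rw [T.eq_sum_ip_smul a]
  simp only [map_sum, LinearMap.sum_apply, map_smul, LinearMap.smul_apply, smul_eq_mul,
    T.ip_symm _ c]

theorem deg_eq_sum (a : A) : T.deg a = ∑ d ∈ T.B, T.ip a d * T.deg d := by
  conv_lhs => rw [T.eq_sum_ip_smul a]
  simp only [map_sum, map_smul, smul_eq_mul]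

theorem deg_eq_re {b : A} (hb : b ∈ T.B) : T.deg b = ((T.deg b).re : ℂ) := by
  obtain ⟨r, -, hr⟩ := T.deg_pos b hb
  simp [hr]

theorem sum_deg_mul_self_ne_zero : ∑ e ∈ T.B, T.deg e * T.deg e ≠ 0 := by
  have hpos : 0 < ∑ e ∈ T.B, (T.deg e).re * (T.deg e).re :=
    sum_pos (fun e he => by obtain ⟨r, hr, hre⟩ := T.deg_pos e he; simp [hre, hr])
      ⟨1, T.one_mem⟩
  rw [sum_congr rfl fun e he => by rw [T.deg_eq_re he]]
  exact_mod_cast hpos.ne'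

/-- Averaging `deg (b̄ e) = deg b̄ · deg e` against `deg e` over the basis turns it into the same
average for `b`, because `(b̄ e, c) = (b c, e)`. -/
theorem deg_bar (b : A) : T.deg (T.bar b) = T.deg b := by
  have hswap : ∀ c e : A, T.ip (T.bar b * e) c = T.ip (b * c) e := fun c e => by
    rw [T.ip_symm, T.ip_assoc, T.bar_bar, mul_comm]
  refine mul_right_cancel₀ T.sum_deg_mul_self_ne_zero ?_
  calc T.deg (T.bar b) * ∑ e ∈ T.B, T.deg e * T.deg e
      = ∑ e ∈ T.B, T.deg (T.bar b * e) * T.deg e := by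
        rw [mul_sum]; exact sum_congr rfl fun e _ => by rw [map_mul, mul_assoc]
    _ = ∑ c ∈ T.B, T.deg c * ∑ e ∈ T.B, T.ip (b * c) e * T.deg e := by
        simp only [T.deg_eq_sum (T.bar b * _), hswap, sum_mul, mul_sum]
        rw [sum_comm]; exact sum_congr rfl fun _ _ => sum_congr rfl fun _ _ => by ring
    _ = T.deg b * ∑ e ∈ T.B, T.deg e * T.deg e := by
        simp only [← T.deg_eq_sum, map_mul, mul_sum]
        exact sum_congr rfl fun _ _ => by ring

/-- The coefficient `(p, d)` as a natural number; it is exact when `p` is a product of two basis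
elements of an integral table algebra (`Integral.ip_mul`). -/
noncomputable def natCoeff (p d : A) : ℕ := ⌊(T.ip p d).re⌋₊

noncomputable def natDeg (d : A) : ℕ := ⌊(T.deg d).re⌋₊

@[simp] theorem natDeg_one : T.natDeg 1 = 1 := by simp [natDeg]

@[simp] theorem natDeg_bar (b : A) : T.natDeg (T.bar b) = T.natDeg b := by
  simp [natDeg, deg_bar]

end

variable {T : TAData A}

theorem Integral.ip_mul {b c d : A} (hT : T.Integral) (hb : b ∈ T.B) (hc : c ∈ T.B)
    (hd : d ∈ T.B) :
    T.ip (b * c) d = T.natCoeff (b * c) d := by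
  obtain ⟨n, hn⟩ := hT.1 b hb c hc d hd
  simp [natCoeff, hn]

theorem Integral.deg_eq {d : A} (hT : T.Integral) (hd : d ∈ T.B) : T.deg d = T.natDeg d := by
  obtain ⟨n, -, hn⟩ := hT.2 d hd
  simp [natDeg, hn]

theorem Integral.natDeg_pos {d : A} (hT : T.Integral) (hd : d ∈ T.B) : 0 < T.natDeg d := by
  obtain ⟨n, hn0, hn⟩ := hT.2 d hd
  simpa [natDeg, hn] using hn0

theorem Integral.ip_mul_self {b c : A} (hT : T.Integral) (hb : b ∈ T.B) (hc : c ∈ T.B) :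
    T.ip (b * c) (b * c) = ((∑ d ∈ T.B, T.natCoeff (b * c) d ^ 2 : ℕ) : ℂ) := by
  rw [T.ip_eq_sum]
  push_cast
  exact sum_congr rfl fun d hd => by rw [hT.ip_mul hb hc hd, sq]

theorem Integral.natDeg_mul {b c : A} (hT : T.Integral) (hb : b ∈ T.B) (hc : c ∈ T.B) :
    T.natDeg b * T.natDeg c = ∑ d ∈ T.B, T.natCoeff (b * c) d * T.natDeg d := by
  have h := T.deg_eq_sum (b * c)
  rw [map_mul, hT.deg_eq hb, hT.deg_eq hc,
    sum_congr rfl fun d hd => by rw [hT.ip_mul hb hc hd, hT.deg_eq hd]] at h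
  exact_mod_cast h

theorem Integral.three_le_natDeg {d : A} (hT : T.Integral) (hS : T.NoSmall) (hd : d ∈ T.B)
    (hd1 : d ≠ 1) :
    3 ≤ T.natDeg d := by
  have hdeg := hT.deg_eq hd
  have := hT.natDeg_pos hd
  have h1 : T.natDeg d ≠ 1 := fun h => hd1 (hS.1 d hd (by simp [hdeg, h]))
  have h2 : T.natDeg d ≠ 2 := fun h => hS.2 d hd (by simp [hdeg, h])
  omega

theorem Integral.exists_eq_of_ip_mul_self_eq_one [DecidableEq A] {b c : A} (hT : T.Integral)
    (hb : b ∈ T.B) (hc : c ∈ T.B) (h : T.ip (b * c) (b * c) = 1) :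
    ∃ z ∈ T.B, b * c = z := by
  rw [hT.ip_mul_self hb hc] at h
  obtain ⟨z, hz, hcoeff⟩ := exists_of_sum_sq_eq_one (by exact_mod_cast h)
  refine ⟨z, hz, T.ext_ip fun d hd => ?_⟩
  rw [hT.ip_mul hb hc hd, hcoeff d hd, T.ip_basis hz hd]
  split_ifs <;> simp

theorem Integral.exists_eq_add_of_ip_mul_self_eq_two [DecidableEq A] {b c : A} (hT : T.Integral)
    (hb : b ∈ T.B) (hc : c ∈ T.B) (h : T.ip (b * c) (b * c) = 2) :
    ∃ x ∈ T.B, ∃ y ∈ T.B, x ≠ y ∧ b * c = x + y := by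
  rw [hT.ip_mul_self hb hc] at h
  obtain ⟨x, hx, y, hy, hxy, hcoeff⟩ := exists_of_sum_sq_eq_two (by exact_mod_cast h)
  refine ⟨x, hx, y, hy, hxy, T.ext_ip fun d hd => ?_⟩
  rw [hT.ip_mul hb hc hd, hcoeff d hd, map_add, LinearMap.add_apply, T.ip_basis hx hd,
    T.ip_basis hy hd]
  split_ifs <;> norm_num

theorem ip_bar_mul_one {b d : A} (hb : b ∈ T.B) (hd : d ∈ T.B) (hdb : d ≠ b) :
    T.ip (T.bar b * d) 1 = 0 := by
  rw [T.ip_symm, T.ip_assoc, one_mul, T.bar_bar]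
  exact T.ip_ne b hb d hd hdb.symm

/-- The constituents of `b̄ d` other than `1` have degree at least `3`, and `e` occurs in `b̄ d`
exactly as often as `d` occurs in `b e`. -/
theorem Integral.natDeg_mul_eq_or_add_three_le [DecidableEq A] (hT : T.Integral)
    (hS : T.NoSmall) {b e d : A} (hb : b ∈ T.B) (he : e ∈ T.B) (hd : d ∈ T.B)
    (hdb : d ≠ b) :
    T.natDeg b * T.natDeg d = T.natDeg e * T.natCoeff (b * e) d ∨
      T.natDeg e * T.natCoeff (b * e) d + 3 ≤ T.natDeg b * T.natDeg d := by
  have hb' := T.bar_mem b hb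
  set f := T.natCoeff (T.bar b * d)
  have hfe : f e = T.natCoeff (b * e) d := by
    have h : T.ip (T.bar b * d) e = T.ip (b * e) d := by
      rw [T.ip_symm, T.ip_assoc, T.bar_bar, mul_comm]
    rw [hT.ip_mul hb' hd he, hT.ip_mul hb he hd] at h
    exact_mod_cast h
  have hf1 : f 1 = 0 := by
    have h := hT.ip_mul hb' hd T.one_mem
    rw [ip_bar_mul_one hb hd hdb] at h
    exact_mod_cast h.symm
  have hrest := sum_eq_zero_or_le_sum (s := T.B.erase e) (f := fun c => f c * T.natDeg c)
    (m := 3) fun c hc hfc => by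
      obtain ⟨hce, hc⟩ := mem_erase.mp hc
      have hc1 : c ≠ 1 := by rintro rfl; simp [hf1] at hfc
      have : f c ≠ 0 := fun h => by simp [h] at hfc
      exact (hT.three_le_natDeg hS hc hc1).trans
        (Nat.le_mul_of_pos_left _ (Nat.pos_of_ne_zero this))
  have hsplit := add_sum_erase T.B (fun c => f c * T.natDeg c) he
  rw [← hT.natDeg_mul hb' hd, natDeg_bar, hfe] at hsplit
  rcases hrest with h | h
  · left; rw [← hsplit, h]; ring
  · right; rw [← hsplit]; linarith

theorem Integral.exists_mul_self_eq_add [DecidableEq A] (hT : T.Integral) {b e : A}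
    (hb : b ∈ T.B) (he : e ∈ T.B) (he1 : e ≠ 1) (hnr : T.bar b ≠ b)
    (hbe : b * T.bar b = 1 + e) :
    ∃ x ∈ T.B, ∃ y ∈ T.B, x ≠ y ∧ x ≠ 1 ∧ y ≠ 1 ∧ b * b = x + y := by
  have hbeb : T.ip (b * e) b = 1 := by
    rw [T.ip_symm, T.ip_assoc, hbe, map_add, LinearMap.add_apply,
      T.ip_ne 1 T.one_mem e he he1.symm, T.ip_self e he, zero_add]
  have hnorm : T.ip (b * b) (b * b) = 2 := by
    rw [T.ip_assoc, show b * b * T.bar b = b + b * e by linear_combination b * hbe, map_add,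
      LinearMap.add_apply, T.ip_self b hb, hbeb]
    norm_num
  obtain ⟨x, hx, y, hy, hxy, hsq⟩ := hT.exists_eq_add_of_ip_mul_self_eq_two hb hb hnorm
  have h1 : T.ip (x + y) 1 = 0 := by
    rw [← hsq, T.ip_symm, T.ip_assoc, one_mul]
    exact T.ip_ne _ (T.bar_mem b hb) b hb hnr
  rw [map_add, LinearMap.add_apply, T.ip_basis hx T.one_mem, T.ip_basis hy T.one_mem] at h1
  refine ⟨x, hx, y, hy, hxy, ?_, ?_, hsq⟩ <;> rintro rfl <;> split_ifs at h1 <;> simp_all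

theorem Integral.exists_mul_bar_eq_add [DecidableEq A] (hT : T.Integral) {b e x : A}
    (hb : b ∈ T.B) (he : e ∈ T.B) (hx : x ∈ T.B) (he1 : e ≠ 1) (hbe : b * T.bar b = 1 + e)
    (hxb : T.ip (x * T.bar b) b = 1) (hx1 : T.natDeg x ≠ 1)
    (hxe : T.natDeg x * T.natDeg x < 1 + 2 * T.natDeg e) :
    ∃ u ∈ T.B, u ≠ b ∧ x * T.bar b = b + u := by
  have hx' := T.bar_mem x hx
  set g := T.natCoeff (x * T.bar x)
  have hg1 : g 1 = 1 := by
    have h := hT.ip_mul hx hx' T.one_mem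
    rw [T.ip_symm, T.ip_assoc, one_mul, T.ip_self _ hx'] at h
    exact_mod_cast h.symm
  have hnorm : T.ip (x * T.bar b) (x * T.bar b) = 1 + g e := by
    rw [T.ip_assoc, show x * T.bar b * T.bar x = x * T.bar x * T.bar b by ring, ← T.ip_assoc,
      hbe, map_add, hT.ip_mul hx hx' T.one_mem, hT.ip_mul hx hx' he]
    change ((g 1 : ℕ) : ℂ) + g e = _
    rw [hg1, Nat.cast_one]
  have hge : g e ≤ 1 := by
    have hsub := sum_le_sum_of_subset (f := fun c => g c * T.natDeg c)
      (insert_subset T.one_mem (singleton_subset_iff.mpr he))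
    rw [sum_pair he1.symm, ← hT.natDeg_mul hx hx', natDeg_bar, hg1, natDeg_one] at hsub
    nlinarith
  interval_cases hg : g e
  · obtain ⟨z, hz, hxz⟩ := hT.exists_eq_of_ip_mul_self_eq_one hx (T.bar_mem b hb)
      (by simpa using hnorm)
    rw [hxz, T.ip_basis hz hb] at hxb
    have hzb : z = b := by by_contra h; simp [h] at hxb
    have hdeg := congrArg T.deg hxz
    rw [hzb, map_mul, deg_bar, hT.deg_eq hx, hT.deg_eq hb] at hdeg
    have hdeg' : T.natDeg x * T.natDeg b = T.natDeg b := by exact_mod_cast hdeg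
    exact (hx1 ((mul_left_eq_self₀.mp hdeg').resolve_right (hT.natDeg_pos hb).ne')).elim
  · obtain ⟨u, hu, v, hv, huv, hxuv⟩ := hT.exists_eq_add_of_ip_mul_self_eq_two hx
      (T.bar_mem b hb) (by rw [hnorm]; norm_num)
    rw [hxuv, map_add, LinearMap.add_apply, T.ip_basis hu hb, T.ip_basis hv hb] at hxb
    by_cases hub : u = b
    · exact ⟨v, hv, hub ▸ huv.symm, hub ▸ hxuv⟩
    · by_cases hvb : v = b
      · exact ⟨u, hu, hub, hvb ▸ hxuv.trans (add_comm u v)⟩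
      · simp [hub, hvb] at hxb

theorem Integral.natCoeff_mul_eq_of_eq_add [DecidableEq A] (hT : T.Integral)
    {b c u y z d : A} (hb : b ∈ T.B) (hc : c ∈ T.B) (hu : u ∈ T.B) (hy : y ∈ T.B)
    (hz : z ∈ T.B) (hd : d ∈ T.B) (h : b * c = u + y * z) :
    T.natCoeff (b * c) d = (if u = d then 1 else 0) + T.natCoeff (y * z) d := by
  have h' : (T.natCoeff (b * c) d : ℂ) = (if u = d then 1 else 0) + T.natCoeff (y * z) d := by
    rw [← hT.ip_mul hb hc hd, h, map_add, LinearMap.add_apply, T.ip_basis hu hd,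
      hT.ip_mul hy hz hd]
  exact_mod_cast h'

theorem Integral.sum_natCoeff_sq_of_eq_add (hT : T.Integral) {b c u y z : A} (hb : b ∈ T.B)
    (hc : c ∈ T.B) (hu : u ∈ T.B) (hy : y ∈ T.B) (hz : z ∈ T.B) (h : b * c = u + y * z) :
    ∑ d ∈ T.B, T.natCoeff (b * c) d ^ 2 =
      1 + 2 * T.natCoeff (y * z) u + ∑ d ∈ T.B, T.natCoeff (y * z) d ^ 2 := by
  have h' : ((∑ d ∈ T.B, T.natCoeff (b * c) d ^ 2 : ℕ) : ℂ) =
      1 + 2 * T.natCoeff (y * z) u + ((∑ d ∈ T.B, T.natCoeff (y * z) d ^ 2 : ℕ) : ℂ) := by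
    rw [← hT.ip_mul_self hb hc, ← hT.ip_mul_self hy hz, h, map_add, map_add,
      LinearMap.add_apply, LinearMap.add_apply, T.ip_self u hu, T.ip_symm u,
      hT.ip_mul hy hz hu]
    ring
  exact_mod_cast h'

/-- The constituents of `y b̄` other than `b` have total degree `3 deg y - 3 ∈ {12, 15}`; each of
them is a constituent of `b e`, hence of degree at least `4`, and at least `7` if it occurs
twice. -/
theorem Integral.sum_natCoeff_sq_le_five [DecidableEq A] (hT : T.Integral) (hS : T.NoSmall)
    {b e u y : A} (hb : b ∈ T.B) (he : e ∈ T.B) (hu : u ∈ T.B) (hy : y ∈ T.B)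
    (hDb : T.natDeg b = 3) (hDe : T.natDeg e = 8) (hub : u ≠ b)
    (hyb : T.ip (y * T.bar b) b = 1)
    (hdeg : T.natDeg y = 5 ∧ T.natDeg u = 9 ∨ T.natDeg y = 6 ∧ T.natDeg u = 6)
    (h : b * e = u + y * T.bar b) :
    ∑ d ∈ T.B, T.natCoeff (b * e) d ^ 2 ≤ 5 := by
  have hb' := T.bar_mem b hb
  have hcoeff := fun d (hd : d ∈ T.B) => hT.natCoeff_mul_eq_of_eq_add hb he hu hy hb' hd h
  have hbound := fun d (hd : d ∈ T.B) hdb => hT.natDeg_mul_eq_or_add_three_le hS hb he hd hdb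
  have hnorm := hT.sum_natCoeff_sq_of_eq_add hb he hu hy hb' h
  have hdegw := hT.natDeg_mul hy hb'
  rw [hT.ip_mul hy hb' hb, Nat.cast_eq_one] at hyb
  rw [← add_sum_erase _ _ hb, hyb, natDeg_bar, hDb] at hdegw
  rw [← add_sum_erase _ (fun d => T.natCoeff (y * T.bar b) d ^ 2) hb, hyb] at hnorm
  set w := T.natCoeff (y * T.bar b)
  have hD : ∀ d ∈ T.B.erase b, w d ≠ 0 → 4 ≤ T.natDeg d ∧ (2 ≤ w d → 7 ≤ T.natDeg d) := by
    intro d hd hwd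
    obtain ⟨hdb, hd⟩ := mem_erase.mp hd
    have hbd := hbound d hd hdb
    have hcd := hcoeff d hd
    rw [hDb, hDe] at hbd
    split_ifs at hcd <;> omega
  have hwu : w u = 0 := by
    have hcu := hcoeff u hu
    rw [if_pos rfl] at hcu
    rcases hdeg with ⟨hy5, hu9⟩ | ⟨-, hu6⟩
    · by_contra hwu
      have hterm : ∀ d ∈ T.B.erase b, w d * T.natDeg d ≠ 0 → 4 ≤ w d * T.natDeg d :=
        fun d hd hwD => (hD d hd (left_ne_zero_of_mul hwD)).1.trans
          (Nat.le_mul_of_pos_left _ (Nat.pos_of_ne_zero (left_ne_zero_of_mul hwD)))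
      have hsingle := sum_eq_of_sum_lt_add (mem_erase.mpr ⟨hub, hu⟩) hterm
        (by rw [hu9]; omega)
      rw [hu9] at hsingle
      omega
    · have := hbound u hu hub
      rw [hDb, hDe, hu6, hcu] at this
      omega
  have := sum_sq_le_three (by omega) (fun d hd hwd => (hD d hd hwd).1)
    (fun d hd hwd => (hD d hd (by omega)).2 hwd)
  omega

theorem Integral.exists_mul_eq_add_mul_bar [DecidableEq A] (hT : T.Integral) (hS : T.NoSmall)
    {b e : A} (hb : b ∈ T.B) (he : e ∈ T.B) (hDb : T.natDeg b = 3) (hDe : T.natDeg e = 8)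
    (hnr : T.bar b ≠ b) (hbe : b * T.bar b = 1 + e) :
    ∃ u ∈ T.B, ∃ y ∈ T.B, u ≠ b ∧ T.ip (y * T.bar b) b = 1 ∧
      (T.natDeg y = 5 ∧ T.natDeg u = 9 ∨ T.natDeg y = 6 ∧ T.natDeg u = 6) ∧
      b * e = u + y * T.bar b := by
  have he1 : e ≠ 1 := by rintro rfl; simp at hDe
  obtain ⟨x, hx, y, hy, hxy, hx1, hy1, hsq⟩ := hT.exists_mul_self_eq_add hb he he1 hnr hbe
  wlog hxy_deg : T.natDeg x ≤ T.natDeg y generalizing x y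
  · exact this y hy x hx hxy.symm hy1 hx1 (hsq.trans (add_comm x y)) (by omega)
  have hdeg : T.natDeg x + T.natDeg y = 9 := by
    have h := congrArg T.deg hsq
    rw [map_mul, map_add, hT.deg_eq hb, hT.deg_eq hx, hT.deg_eq hy, hDb] at h
    exact_mod_cast (by linear_combination -h : (T.natDeg x : ℂ) + T.natDeg y = 9)
  have hx3 := hT.three_le_natDeg hS hx hx1
  have hx4 : T.natDeg x ≤ 4 := by omega
  have hxb : T.ip (x * T.bar b) b = 1 := by
    rw [← T.ip_assoc, hsq, map_add, T.ip_self x hx, T.ip_ne x hx y hy hxy, add_zero]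
  have hyb : T.ip (y * T.bar b) b = 1 := by
    rw [← T.ip_assoc, hsq, map_add, T.ip_self y hy, T.ip_ne y hy x hx hxy.symm, zero_add]
  obtain ⟨u, hu, hub, hxu⟩ := hT.exists_mul_bar_eq_add hb he hx he1 hbe hxb (by omega)
    (by rw [hDe]; nlinarith)
  have hDu : T.natDeg u + 3 = 3 * T.natDeg x := by
    have h := congrArg T.deg hxu
    rw [map_mul, map_add, T.deg_bar, hT.deg_eq hb, hT.deg_eq hx, hT.deg_eq hu, hDb] at h
    exact_mod_cast (by linear_combination -h : (T.natDeg u : ℂ) + 3 = 3 * T.natDeg x)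
  refine ⟨u, hu, y, hy, hub, hyb, by omega, ?_⟩
  linear_combination (-b) * hbe + T.bar b * hsq + hxu

end TAData

/-- Lemma 4.2: if `(b₃b₈, b₃b₈) ≥ 4` then every constituent of
`b₃b₈` other than `b₃` has degree `> 3`, and `(b₃b₈, b₃b₈) ∈ {4, 5}`. -/
theorem stmt_6 {A : Type} [CommRing A] [Algebra ℂ A] (T : TAData A)
    (hInt : T.Integral) (hSmall : T.NoSmall)
    (b3 b8 : A)
    (hb3 : b3 ∈ T.B) (hd3 : T.deg b3 = 3) (hnr : T.bar b3 ≠ b3)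
    (hb8 : b8 ∈ T.B) (hd8 : T.deg b8 = 8)
    (hmul : b3 * T.bar b3 = 1 + b8)
    (hip : ∃ k : ℕ, T.ip (b3 * b8) (b3 * b8) = (k : ℂ) ∧ 4 ≤ k) :
    (∀ d ∈ T.B, T.ip (b3 * b8) d ≠ 0 → d ≠ b3 →
      ∃ m : ℕ, T.deg d = (m : ℂ) ∧ 3 < m) ∧
    (T.ip (b3 * b8) (b3 * b8) = 4 ∨ T.ip (b3 * b8) (b3 * b8) = 5) := by
  classical
  have hD3 : T.natDeg b3 = 3 := by simp [TAData.natDeg, hd3]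
  have hD8 : T.natDeg b8 = 8 := by simp [TAData.natDeg, hd8]
  refine ⟨fun d hd hcd hdb3 => ⟨T.natDeg d, hInt.deg_eq hd, ?_⟩, ?_⟩
  · have hbound := hInt.natDeg_mul_eq_or_add_three_le hSmall hb3 hb8 hd hdb3
    rw [hInt.ip_mul hb3 hb8 hd, Nat.cast_ne_zero] at hcd
    rw [hD3, hD8] at hbound
    omega
  obtain ⟨u, hu, y, hy, hub3, hyb3, hdeg, hb3b8⟩ :=
    hInt.exists_mul_eq_add_mul_bar hSmall hb3 hb8 hD3 hD8 hnr hmul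
  have hle := hInt.sum_natCoeff_sq_le_five hSmall hb3 hb8 hu hy hD3 hD8 hub3 hyb3 hdeg hb3b8
  obtain ⟨k, hk, hk4⟩ := hip
  rw [hInt.ip_mul_self hb3 hb8] at hk ⊢
  have hk' : ∑ d ∈ T.B, T.natCoeff (b3 * b8) d ^ 2 = k := by exact_mod_cast hk
  rw [hk]
  rcases (show k = 4 ∨ k = 5 by omega) with rfl | rfl <;> norm_num
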